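/- arXiv:2508.16308 — 6 statements merged into one kernel-verified Lean document; each statement's English description precedes it below -/
import Mathlib

section
/- If γ is a Δ_E-partial coloring of a graph G (i.e., every vertex v has at least min(Δ_E, deg(v)) neighbors colored differently from v), then γ is a proper coloring of G. -/
def IsProperColoring {V C : Type*} (G : SimpleGraph V) (γ : V → C) : Prop :=
  ∀ ⦃u v⦄, G.Adj u v → γ u ≠ γ v

def IsPartialColoring {V C : Type*} [Fintype V] [DecidableEq C]
    (G : SimpleGraph V) [DecidableRel G.Adj] (k : ℕ) (γ : V → C) : Prop :=
  ∀ v, min k (G.degree v) ≤ ((G.neighborFinset v).filter (fun w => γ w ≠ γ v)).card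

def deltaE {V : Type*} [Fintype V] (G : SimpleGraph V) [DecidableRel G.Adj] : ℕ :=
  Finset.univ.sup (fun p : V × V =>
    if G.Adj p.1 p.2 then min (G.degree p.1) (G.degree p.2) else 0)

theorem partial_deltaE_is_proper {V C : Type*} [Fintype V] [DecidableEq C]
    (G : SimpleGraph V) [DecidableRel G.Adj] (γ : V → C)
    (h : IsPartialColoring G (deltaE G) γ) :
    IsProperColoring G γ := by
  intro u v hadj hne
  wlog hdeg : G.degree u ≤ G.degree v generalizing u v
  · exact this hadj.symm hne.symm (le_of_not_ge hdeg)
  have hdE : min (G.degree u) (G.degree v) ≤ deltaE G := by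
    have := Finset.le_sup (f := fun p : V × V =>
      if G.Adj p.1 p.2 then min (G.degree p.1) (G.degree p.2) else 0)
      (Finset.mem_univ (u, v))
    simpa [hadj, deltaE] using this
  have hmin : min (G.degree u) (G.degree v) = G.degree u := min_eq_left hdeg
  rw [hmin] at hdE
  have h2 := h u
  rw [min_eq_right hdE] at h2
  have hcard : (G.neighborFinset u).card ≤
      ((G.neighborFinset u).filter (fun w => γ w ≠ γ u)).card := by
    simpa [SimpleGraph.card_neighborFinset_eq_degree] using h2
  have heq : (G.neighborFinset u).filter (fun w => γ w ≠ γ u) = G.neighborFinset u :=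
    Finset.eq_of_subset_of_card_le (Finset.filter_subset _ _) hcard
  have hv : v ∈ (G.neighborFinset u).filter (fun w => γ w ≠ γ u) := by
    rw [heq]; exact (SimpleGraph.mem_neighborFinset _ _ _).mpr hadj
  exact (Finset.mem_filter.mp hv).2 hne.symm
end

section
/- For every finite simple graph G, the degeneracy of G is at most Δ_E, i.e., there is an ordering of the vertices in which every vertex has at most Δ_E neighbors appearing later in the ordering. -/
/-- There is an ordering of the vertices (an injective ranking `f : V → ℕ`)
in which every vertex has at most `Δ_E` neighbors appearing later. -/
theorem degeneracy_le_deltaE {V : Type*} [Fintype V] [DecidableEq V]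
    (G : SimpleGraph V) [DecidableRel G.Adj] :
    ∃ f : V → ℕ, Function.Injective f ∧
      ∀ v : V, ((G.neighborFinset v).filter (fun w => f v < f w)).card ≤ deltaE G := by
  classical
  set n := Fintype.card V with hn
  let e := Fintype.equivFin V
  have key : ∀ {dv dw ev ew : ℕ}, ev < n → ew < n →
      n * dv + ev < n * dw + ew → dv ≤ dw := by
    intro dv dw ev ew hev hew h
    by_contra hc
    have h1 : dw + 1 ≤ dv := by omega
    have h2 : n * (dw + 1) ≤ n * dv := Nat.mul_le_mul_left n h1
    have : n * (dw + 1) = n * dw + n := by ring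
    omega
  refine ⟨fun v => n * G.degree v + (e v : ℕ), ?_, ?_⟩
  · intro v w h
    have h' : n * G.degree v + (e v : ℕ) = n * G.degree w + (e w : ℕ) := h
    clear h
    have hev : (e v : ℕ) < n := (e v).isLt
    have hew : (e w : ℕ) < n := (e w).isLt
    have hd : G.degree v = G.degree w := by
      rcases lt_trichotomy (G.degree v) (G.degree w) with hlt | heq | hgt
      · exfalso
        have h1 : G.degree v + 1 ≤ G.degree w := hlt
        have h2 : n * (G.degree v + 1) ≤ n * G.degree w := Nat.mul_le_mul_left n h1
        have : n * (G.degree v + 1) = n * G.degree v + n := by ring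
        omega
      · exact heq
      · exfalso
        have h1 : G.degree w + 1 ≤ G.degree v := hgt
        have h2 : n * (G.degree w + 1) ≤ n * G.degree v := Nat.mul_le_mul_left n h1
        have : n * (G.degree w + 1) = n * G.degree w + n := by ring
        omega
    rw [hd] at h'
    have : (e v : ℕ) = (e w : ℕ) := by omega
    exact e.injective (Fin.ext this)
  · intro v
    show ((G.neighborFinset v).filter
        (fun w => n * G.degree v + (e v : ℕ) < n * G.degree w + (e w : ℕ))).card ≤ deltaE G
    by_cases hS : ((G.neighborFinset v).filter
        (fun w => n * G.degree v + (e v : ℕ) < n * G.degree w + (e w : ℕ))).Nonempty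
    · obtain ⟨w, hw⟩ := hS
      rw [Finset.mem_filter, SimpleGraph.mem_neighborFinset] at hw
      obtain ⟨hadj, hlt⟩ := hw
      have hdeg : G.degree v ≤ G.degree w := key (e v).isLt (e w).isLt hlt
      have h1 : ((G.neighborFinset v).filter
          (fun w => n * G.degree v + (e v : ℕ) < n * G.degree w + (e w : ℕ))).card
          ≤ G.degree v := by
        calc _ ≤ (G.neighborFinset v).card := Finset.card_filter_le _ _
        _ = G.degree v := G.card_neighborFinset_eq_degree v
      have h2 : G.degree v ≤ deltaE G := by
        have h3 := Finset.le_sup (f := fun p : V × V =>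
          if G.Adj p.1 p.2 then min (G.degree p.1) (G.degree p.2) else 0)
          (Finset.mem_univ (v, w))
        simpa [deltaE, hadj, Nat.min_eq_left hdeg] using h3
      omega
    · rw [Finset.not_nonempty_iff_eq_empty] at hS
      simp [hS]
end

section
/- Every finite simple graph G admits a k-partial (k+1)-coloring for every integer k ≥ 0; that is, there exists γ : V → {1,…,k+1} such that every vertex v has at least min(k, deg(v)) neighbors w with γ(w) ≠ γ(v). -/
theorem exists_partial_coloring_succ {V : Type*} [Fintype V]
    (G : SimpleGraph V) [DecidableRel G.Adj] (k : ℕ) :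
    ∃ γ : V → Fin (k + 1), IsPartialColoring G k γ := by
  classical
  -- s δ u : number of neighbors of u with the same color as u
  set s : (V → Fin (k + 1)) → V → ℕ :=
    fun δ u => ((G.neighborFinset u).filter (fun w => δ w = δ u)).card with hs
  set f : (V → Fin (k + 1)) → ℕ := fun δ => ∑ u, s δ u with hfdef
  obtain ⟨γ, -, hγ⟩ :=
    Finset.exists_min_image (Finset.univ : Finset (V → Fin (k + 1))) f
      ⟨fun _ => 0, Finset.mem_univ _⟩
  refine ⟨γ, fun v => ?_⟩
  set d := G.degree v with hd
  -- fibers of γ over the neighborhood of v sum to the degree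
  have hfib : ∑ c : Fin (k + 1),
      ((G.neighborFinset v).filter (fun w => γ w = c)).card = d := by
    rw [← Finset.card_eq_sum_card_fiberwise (fun w _ => Finset.mem_univ (γ w))]
    rfl
  -- pigeonhole: some color is used on at most d/(k+1) neighbors of v
  have hc : ∃ c : Fin (k + 1),
      ((G.neighborFinset v).filter (fun w => γ w = c)).card ≤ d / (k + 1) := by
    by_contra h
    push_neg at h
    have hsum : ∑ _c : Fin (k + 1), (d / (k + 1) + 1) ≤
        ∑ c : Fin (k + 1), ((G.neighborFinset v).filter (fun w => γ w = c)).card :=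
      Finset.sum_le_sum fun c _ => h c
    rw [hfib, Finset.sum_const, Finset.card_univ, Fintype.card_fin, smul_eq_mul,
      mul_add, mul_one] at hsum
    have h1 := Nat.div_add_mod d (k + 1)
    have h2 := Nat.mod_lt d (Nat.succ_pos k)
    linarith
  obtain ⟨c, hcle⟩ := hc
  -- key decomposition: for any δ agreeing with γ off v, f δ = 2 * s δ v + T
  have key : ∀ δ : V → Fin (k + 1), (∀ w, w ≠ v → δ w = γ w) →
      f δ = 2 * s δ v + ∑ u ∈ Finset.univ.erase v,
        ((G.neighborFinset u).filter (fun w => w ≠ v ∧ γ w = γ u)).card := by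
    intro δ hδ
    have hsv : s δ v = ((G.neighborFinset v).filter (fun u => γ u = δ v)).card := by
      simp only [hs]
      refine Finset.card_bij (fun w _ => w) ?_ (fun _ _ _ _ h => h) ?_
      · intro w hw
        simp only [Finset.mem_filter] at hw ⊢
        refine ⟨hw.1, ?_⟩
        have hne : w ≠ v := G.ne_of_adj (G.adj_symm ((G.mem_neighborFinset v w).mp hw.1))
        rw [← hδ w hne]; exact hw.2
      · intro w hw
        simp only [Finset.mem_filter] at hw
        have hne : w ≠ v := G.ne_of_adj (G.adj_symm ((G.mem_neighborFinset v w).mp hw.1))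
        exact ⟨w, Finset.mem_filter.mpr ⟨hw.1, by rw [hδ w hne]; exact hw.2⟩, rfl⟩
    have step : ∀ u, u ≠ v → s δ u =
        ((G.neighborFinset u).filter (fun w => w ≠ v ∧ γ w = γ u)).card +
        (if v ∈ G.neighborFinset u ∧ δ v = γ u then 1 else 0) := by
      intro u hu
      have hδu : δ u = γ u := hδ u hu
      have hsplit := Finset.card_filter_add_card_filter_not
        (s := (G.neighborFinset u).filter (fun w => δ w = δ u)) (p := fun w => w = v)
      rw [Finset.filter_filter, Finset.filter_filter] at hsplit
      have e1 : (G.neighborFinset u).filter (fun w => δ w = δ u ∧ ¬ w = v) =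
          (G.neighborFinset u).filter (fun w => w ≠ v ∧ γ w = γ u) := by
        apply Finset.filter_congr
        intro w _
        constructor
        · rintro ⟨h1, h2⟩; exact ⟨h2, by rw [← hδ w h2, ← hδu]; exact h1⟩
        · rintro ⟨h1, h2⟩; exact ⟨by rw [hδ w h1, hδu]; exact h2, h1⟩
      have e2 : (G.neighborFinset u).filter (fun w => δ w = δ u ∧ w = v) =
          if v ∈ G.neighborFinset u ∧ δ v = γ u then {v} else ∅ := by
        by_cases hvm : v ∈ G.neighborFinset u ∧ δ v = γ u
        · rw [if_pos hvm]
          ext w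
          simp only [Finset.mem_filter, Finset.mem_singleton]
          constructor
          · rintro ⟨_, _, h⟩; exact h
          · rintro rfl; exact ⟨hvm.1, by rw [hδu]; exact hvm.2, rfl⟩
        · rw [if_neg hvm]
          ext w
          simp only [Finset.mem_filter, Finset.notMem_empty, iff_false, not_and]
          rintro hmem heq rfl
          exact hvm ⟨hmem, by rw [← hδu]; exact heq⟩
      have e2c : ((G.neighborFinset u).filter (fun w => δ w = δ u ∧ w = v)).card =
          if v ∈ G.neighborFinset u ∧ δ v = γ u then 1 else 0 := by
        rw [e2]; split <;> simp
      show ((G.neighborFinset u).filter (fun w => δ w = δ u)).card = _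
      rw [← hsplit, e1, e2c, Nat.add_comm]
    have hsum2 : ∑ u ∈ Finset.univ.erase v,
        (if v ∈ G.neighborFinset u ∧ δ v = γ u then 1 else 0) = s δ v := by
      rw [← Finset.card_filter, hsv]
      congr 1
      ext u
      simp only [Finset.mem_filter, Finset.mem_erase, Finset.mem_univ, true_and, and_true,
        SimpleGraph.mem_neighborFinset]
      constructor
      · rintro ⟨hne, hadj, heq⟩; exact ⟨G.adj_symm hadj, heq.symm⟩
      · rintro ⟨hadj, heq⟩; exact ⟨(G.ne_of_adj hadj).symm, G.adj_symm hadj, heq.symm⟩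
    have : f δ = s δ v + ∑ u ∈ Finset.univ.erase v, s δ u := by
      rw [hfdef]
      exact (Finset.add_sum_erase _ _ (Finset.mem_univ v)).symm
    rw [this]
    have : ∑ u ∈ Finset.univ.erase v, s δ u =
        (∑ u ∈ Finset.univ.erase v,
          ((G.neighborFinset u).filter (fun w => w ≠ v ∧ γ w = γ u)).card) + s δ v := by
      rw [← hsum2, ← Finset.sum_add_distrib]
      apply Finset.sum_congr rfl
      intro u hu
      exact step u (Finset.mem_erase.mp hu).1
    rw [this]
    ring
  -- apply minimality with the recoloring of v to c
  set γ' : V → Fin (k + 1) := Function.update γ v c with hγ'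
  have hagr : ∀ w, w ≠ v → γ' w = γ w := fun w hw => Function.update_of_ne hw _ _
  have hfle : f γ ≤ f γ' := hγ γ' (Finset.mem_univ _)
  have k1 := key γ (fun _ _ => rfl)
  have k2 := key γ' hagr
  have hmin : s γ v ≤ s γ' v := by omega
  have hγ'v : s γ' v = ((G.neighborFinset v).filter (fun w => γ w = c)).card := by
    simp only [hs]
    apply Finset.card_bij (fun w _ => w) ?_ (fun _ _ _ _ h => h) ?_
    · intro w hw
      simp only [Finset.mem_filter] at hw ⊢
      have hne : w ≠ v := G.ne_of_adj (G.adj_symm ((G.mem_neighborFinset v w).mp hw.1))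
      refine ⟨hw.1, ?_⟩
      have := hw.2
      rwa [hagr w hne, hγ', Function.update_self] at this
    · intro w hw
      simp only [Finset.mem_filter] at hw
      have hne : w ≠ v := G.ne_of_adj (G.adj_symm ((G.mem_neighborFinset v w).mp hw.1))
      refine ⟨w, Finset.mem_filter.mpr ⟨hw.1, ?_⟩, rfl⟩
      rw [hagr w hne, hγ', Function.update_self]
      exact hw.2
  have hsle : s γ v ≤ d / (k + 1) := by rw [← hγ'v] at hcle; exact le_trans hmin hcle
  have hmul : s γ v * (k + 1) ≤ d :=
    (Nat.le_div_iff_mul_le (Nat.succ_pos k)).mp hsle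
  -- split the neighborhood
  have hsplit := Finset.card_filter_add_card_filter_not
    (s := G.neighborFinset v) (p := fun w => γ w = γ v)
  have hcard : (G.neighborFinset v).card = d := rfl
  rw [hcard] at hsplit
  have hgoal : ((G.neighborFinset v).filter (fun w => γ w ≠ γ v)).card =
      ((G.neighborFinset v).filter (fun w => ¬ γ w = γ v)).card := by
    apply congrArg
    apply Finset.filter_congr
    intro w _
    exact Iff.rfl
  rw [hgoal]
  have hsv : s γ v = ((G.neighborFinset v).filter (fun w => γ w = γ v)).card := rfl
  rcases Nat.eq_zero_or_pos (s γ v) with h0 | h1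
  · omega
  · have hks : k + s γ v ≤ s γ v * (k + 1) := by nlinarith
    omega
end

section
/- Let k ≥ 3. In the edge gadget construction, where vertices u and v are connected through a k-clique on vertices w_1,…,w_k, with u adjacent to w_1,…,w_{k-1} and v adjacent to w_k, any k-partial k-coloring γ of the whole graph satisfies γ(u) = γ(w_k) and hence γ(u) ≠ γ(v), provided each w_i has degree exactly k in the graph. -/
theorem edge_gadget_forces_distinct_colors {V : Type*} [Fintype V]
    (G : SimpleGraph V) [DecidableRel G.Adj] (k : ℕ) (hk : 3 ≤ k)
    (u v : V) (w : Fin k → V)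
    (hw : Function.Injective w)
    (huw : ∀ i, u ≠ w i) (hvw : ∀ i, v ≠ w i) (huv : u ≠ v)
    (hclique : ∀ i j, i ≠ j → G.Adj (w i) (w j))
    (hu : ∀ i : Fin k, (i : ℕ) < k - 1 → G.Adj u (w i))
    (hv : G.Adj v (w ⟨k - 1, by omega⟩))
    (hdeg : ∀ i, G.degree (w i) = k)
    (γ : V → Fin k) (hγ : IsPartialColoring G k γ) :
    γ u = γ (w ⟨k - 1, by omega⟩) ∧ γ u ≠ γ v := by
  -- key: every neighbor of w i has a different color from w i
  have key : ∀ i : Fin k, ∀ x, G.Adj (w i) x → γ x ≠ γ (w i) := by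
    intro i x hx
    have h := hγ (w i)
    rw [hdeg i, min_self] at h
    have hsub : ((G.neighborFinset (w i)).filter (fun y => γ y ≠ γ (w i))) ⊆
        G.neighborFinset (w i) := Finset.filter_subset _ _
    have hcard : (G.neighborFinset (w i)).card = k := by
      rw [SimpleGraph.card_neighborFinset_eq_degree, hdeg i]
    have heq : ((G.neighborFinset (w i)).filter (fun y => γ y ≠ γ (w i))) =
        G.neighborFinset (w i) :=
      Finset.eq_of_subset_of_card_le hsub (by rw [hcard]; exact h)
    have hxmem : x ∈ G.neighborFinset (w i) := by
      rw [SimpleGraph.mem_neighborFinset]; exact hx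
    rw [← heq] at hxmem
    exact (Finset.mem_filter.mp hxmem).2
  have hinj : Function.Injective (fun i : Fin k => γ (w i)) := by
    intro i j hij'
    have hij : γ (w i) = γ (w j) := hij'
    by_contra hne
    exact key i (w j) (hclique i j (fun h => hne (h ▸ rfl))) hij.symm
  have hsurj : Function.Surjective (fun i : Fin k => γ (w i)) :=
    Finite.surjective_of_injective hinj
  obtain ⟨i, hi'⟩ := hsurj (γ u)
  have hi : γ (w i) = γ u := hi'
  have hik : i = ⟨k - 1, by omega⟩ := by
    by_contra hne
    have hlt : (i : ℕ) < k - 1 := by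
      have := i.2
      have : (i : ℕ) ≠ k - 1 := fun h => hne (Fin.ext h)
      omega
    exact key i u ((hu i hlt).symm) hi.symm
  have h1 : γ u = γ (w ⟨k - 1, by omega⟩) := by rw [← hik, hi]
  refine ⟨h1, ?_⟩
  have h2 : γ v ≠ γ (w ⟨k - 1, by omega⟩) := key _ v hv.symm
  rw [h1]
  exact fun h => h2 h.symm
end

section
/- Let k ≥ 3 and let G' be obtained from a graph G by replacing every edge {u,v} with the edge gadget e_{u,v} (a k-clique w^{uv}_1,…,w^{uv}_k with u adjacent to w^{uv}_1,…,w^{uv}_{k-1} and v adjacent to w^{uv}_k). Then G is properly k-colorable if and only if G' admits a k-partial k-coloring. -/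
/-- The base relation of the gadget graph `G'` obtained from an orientation `R`
of the edges of `G`: original edges are deleted; for each oriented edge `(u,v)`
a fresh `k`-clique `w^{uv}_0, …, w^{uv}_{k-1}` is added, with `u` adjacent to
`w^{uv}_0, …, w^{uv}_{k-2}` and `v` adjacent to `w^{uv}_{k-1}`. -/
def gadgetRel {V : Type*} (R : V → V → Prop) (k : ℕ) :
    (V ⊕ (V × V × Fin k)) → (V ⊕ (V × V × Fin k)) → Prop
  | Sum.inl x, Sum.inr ⟨u, v, i⟩ =>
      R u v ∧ ((x = u ∧ (i : ℕ) < k - 1) ∨ (x = v ∧ (i : ℕ) = k - 1))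
  | Sum.inr ⟨u, v, _⟩, Sum.inr ⟨u', v', _⟩ => u = u' ∧ v = v' ∧ R u v
  | _, _ => False

def gadgetGraph {V : Type*} (R : V → V → Prop) (k : ℕ) :
    SimpleGraph (V ⊕ (V × V × Fin k)) :=
  SimpleGraph.fromRel (gadgetRel R k)

lemma partial_of_locally_proper {V C : Type*} [Fintype V] [DecidableEq C]
    (G : SimpleGraph V) [DecidableRel G.Adj] (k : ℕ) (γ : V → C)
    (h : ∀ ⦃u v⦄, G.Adj u v → γ u ≠ γ v) : IsPartialColoring G k γ := by
  intro v
  have heq : (G.neighborFinset v).filter (fun w => γ w ≠ γ v) = G.neighborFinset v := by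
    apply Finset.filter_true_of_mem
    intro w hw
    rw [SimpleGraph.mem_neighborFinset] at hw
    exact h hw.symm
  rw [heq, SimpleGraph.card_neighborFinset_eq_degree]
  exact min_le_right _ _



lemma swap_ne {α : Type*} [DecidableEq α] {a b i : α} (h : i ≠ b) : Equiv.swap a b i ≠ a :=
  fun hc => h ((Equiv.swap a b).injective (hc.trans (Equiv.swap_apply_right a b).symm))

theorem proper_colorable_iff_gadget_partial_colorable {V : Type*} [Fintype V] [DecidableEq V]
    (G : SimpleGraph V) (R : V → V → Prop)
    (hR : ∀ u v, G.Adj u v ↔ (R u v ∨ R v u))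
    (hRasym : ∀ u v, R u v → ¬ R v u)
    (k : ℕ) (hk : 3 ≤ k)
    [DecidableRel (gadgetGraph R k).Adj] :
    (∃ γ : V → Fin k, IsProperColoring G γ) ↔
      (∃ γ' : (V ⊕ (V × V × Fin k)) → Fin k,
        IsPartialColoring (gadgetGraph R k) k γ') := by
  have h2 : k - 1 < k := by omega
  set last : Fin k := ⟨k - 1, h2⟩ with hlast
  constructor
  · rintro ⟨γ, hγ⟩
    refine ⟨Sum.elim γ (fun p => Equiv.swap (γ p.1) last p.2.2), partial_of_locally_proper _ _ _ ?_⟩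
    rintro (x | ⟨u, v, i⟩) (y | ⟨u', v', j⟩) hxy <;>
      rw [gadgetGraph, SimpleGraph.fromRel_adj] at hxy
    · obtain ⟨hne, h | h⟩ := hxy <;> exact (h : False).elim
    · -- inl x, inr (u',v',j)
      obtain ⟨hne, h | h⟩ := hxy
      swap
      · exact (h : False).elim
      obtain ⟨hr, hc⟩ :=
        (h : R u' v' ∧ ((x = u' ∧ (j : ℕ) < k - 1) ∨ (x = v' ∧ (j : ℕ) = k - 1)))
      rcases hc with ⟨rfl, hi⟩ | ⟨rfl, hi⟩
      · have hj : j ≠ last := fun hj => by rw [hj] at hi; simp [hlast] at hi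
        simp only [Sum.elim_inl, Sum.elim_inr]
        exact (swap_ne hj).symm
      · have hj : j = last := Fin.ext hi
        simp only [Sum.elim_inl, Sum.elim_inr, hj, Equiv.swap_apply_right]
        exact (hγ ((hR _ _).2 (Or.inl hr))).symm
    · -- inr (u,v,i), inl y
      obtain ⟨hne, h | h⟩ := hxy
      · exact (h : False).elim
      obtain ⟨hr, hc⟩ :=
        (h : R u v ∧ ((y = u ∧ (i : ℕ) < k - 1) ∨ (y = v ∧ (i : ℕ) = k - 1)))
      rcases hc with ⟨rfl, hi⟩ | ⟨rfl, hi⟩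
      · have hj : i ≠ last := fun hj => by rw [hj] at hi; simp [hlast] at hi
        simp only [Sum.elim_inl, Sum.elim_inr]
        exact swap_ne hj
      · have hj : i = last := Fin.ext hi
        simp only [Sum.elim_inl, Sum.elim_inr, hj, Equiv.swap_apply_right]
        exact hγ ((hR _ _).2 (Or.inl hr))
    · -- inr, inr
      obtain ⟨hne, h | h⟩ := hxy
      · obtain ⟨rfl, rfl, hr⟩ := (h : u = u' ∧ v = v' ∧ R u v)
        have hij : i ≠ j := fun hij => hne (by rw [hij])
        simp only [Sum.elim_inr]
        exact fun hc => hij ((Equiv.swap (γ u) last).injective hc)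
      · obtain ⟨rfl, rfl, hr⟩ := (h : u' = u ∧ v' = v ∧ R u' v')
        have hij : i ≠ j := fun hij => hne (by rw [hij])
        simp only [Sum.elim_inr]
        exact fun hc => hij ((Equiv.swap (γ u') last).injective hc)
  · rintro ⟨γ', hγ'⟩
    have hall : ∀ (u v : V) (i : Fin k), ∀ y,
        (gadgetGraph R k).Adj (Sum.inr (u, v, i)) y → γ' y ≠ γ' (Sum.inr (u, v, i)) := by
      intro u v i
      have hdeg : ((gadgetGraph R k).neighborFinset (Sum.inr (u, v, i))).card ≤ k := by
        have hinjon := Finset.card_le_card_of_injOn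
          (f := fun y : V ⊕ (V × V × Fin k) => match y with
            | Sum.inl _ => i
            | Sum.inr (_, _, j) => j)
          (s := (gadgetGraph R k).neighborFinset (Sum.inr (u, v, i)))
          (t := (Finset.univ : Finset (Fin k)))
          (fun y _ => Finset.mem_univ _) ?_
        · simpa using hinjon
        · rintro (y₁ | ⟨u₁, v₁, j₁⟩) hy₁ (y₂ | ⟨u₂, v₂, j₂⟩) hy₂ hf <;>
            rw [Finset.mem_coe, SimpleGraph.mem_neighborFinset, gadgetGraph,
              SimpleGraph.fromRel_adj] at hy₁ hy₂
          · -- both inl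
            obtain ⟨hne₁, h₁ | h₁⟩ := hy₁
            · exact (h₁ : False).elim
            obtain ⟨hne₂, h₂ | h₂⟩ := hy₂
            · exact (h₂ : False).elim
            obtain ⟨-, hc₁⟩ :=
              (h₁ : R u v ∧ ((y₁ = u ∧ (i : ℕ) < k - 1) ∨ (y₁ = v ∧ (i : ℕ) = k - 1)))
            obtain ⟨-, hc₂⟩ :=
              (h₂ : R u v ∧ ((y₂ = u ∧ (i : ℕ) < k - 1) ∨ (y₂ = v ∧ (i : ℕ) = k - 1)))
            rcases hc₁ with ⟨rfl, hi₁⟩ | ⟨rfl, hi₁⟩ <;>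
              rcases hc₂ with ⟨rfl, hi₂⟩ | ⟨rfl, hi₂⟩ <;> first | rfl | omega
          · -- inl, inr : impossible
            exfalso
            have e₂ : u₂ = u ∧ v₂ = v := by
              obtain ⟨hne₂, h₂ | h₂⟩ := hy₂
              · obtain ⟨h, h', -⟩ := (h₂ : u = u₂ ∧ v = v₂ ∧ R u v)
                exact ⟨h.symm, h'.symm⟩
              · obtain ⟨h, h', -⟩ := (h₂ : u₂ = u ∧ v₂ = v ∧ R u₂ v₂)
                exact ⟨h, h'⟩
            obtain ⟨hne₂, -⟩ := hy₂
            simp only at hf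
            exact hne₂ (by rw [e₂.1, e₂.2, hf])
          · -- inr, inl : impossible
            exfalso
            have e₁ : u₁ = u ∧ v₁ = v := by
              obtain ⟨hne₁, h₁ | h₁⟩ := hy₁
              · obtain ⟨h, h', -⟩ := (h₁ : u = u₁ ∧ v = v₁ ∧ R u v)
                exact ⟨h.symm, h'.symm⟩
              · obtain ⟨h, h', -⟩ := (h₁ : u₁ = u ∧ v₁ = v ∧ R u₁ v₁)
                exact ⟨h, h'⟩
            obtain ⟨hne₁, -⟩ := hy₁
            simp only at hf
            exact hne₁ (by rw [e₁.1, e₁.2, ← hf])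
          · -- both inr
            have e₁ : u₁ = u ∧ v₁ = v := by
              obtain ⟨hne₁, h₁ | h₁⟩ := hy₁
              · obtain ⟨h, h', -⟩ := (h₁ : u = u₁ ∧ v = v₁ ∧ R u v)
                exact ⟨h.symm, h'.symm⟩
              · obtain ⟨h, h', -⟩ := (h₁ : u₁ = u ∧ v₁ = v ∧ R u₁ v₁)
                exact ⟨h, h'⟩
            have e₂ : u₂ = u ∧ v₂ = v := by
              obtain ⟨hne₂, h₂ | h₂⟩ := hy₂
              · obtain ⟨h, h', -⟩ := (h₂ : u = u₂ ∧ v = v₂ ∧ R u v)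
                exact ⟨h.symm, h'.symm⟩
              · obtain ⟨h, h', -⟩ := (h₂ : u₂ = u ∧ v₂ = v ∧ R u₂ v₂)
                exact ⟨h, h'⟩
            simp only at hf
            rw [e₁.1, e₁.2, e₂.1, e₂.2, hf]
      have hmin : min k ((gadgetGraph R k).degree (Sum.inr (u, v, i)))
          = (gadgetGraph R k).degree (Sum.inr (u, v, i)) := by
        rw [← SimpleGraph.card_neighborFinset_eq_degree]
        exact min_eq_right hdeg
      have hfil := hγ' (Sum.inr (u, v, i))
      rw [hmin, ← SimpleGraph.card_neighborFinset_eq_degree] at hfil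
      have heq := Finset.eq_of_subset_of_card_le
        (Finset.filter_subset (fun y => γ' y ≠ γ' (Sum.inr (u, v, i)))
          ((gadgetGraph R k).neighborFinset (Sum.inr (u, v, i)))) hfil
      intro y hy
      have hmem : y ∈ (gadgetGraph R k).neighborFinset (Sum.inr (u, v, i)) := by
        rw [SimpleGraph.mem_neighborFinset]; exact hy
      rw [← heq] at hmem
      exact (Finset.mem_filter.1 hmem).2
    have key : ∀ u v : V, R u v → γ' (Sum.inl u) ≠ γ' (Sum.inl v) := by
      intro u v hr
      have hadjclique : ∀ i j : Fin k, i ≠ j →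
          (gadgetGraph R k).Adj (Sum.inr (u, v, i)) (Sum.inr (u, v, j)) := by
        intro i j hij
        rw [gadgetGraph, SimpleGraph.fromRel_adj]
        exact ⟨by simp [hij], Or.inl ⟨rfl, rfl, hr⟩⟩
      have hinj : Function.Injective (fun j : Fin k => γ' (Sum.inr (u, v, j))) := by
        intro j₁ j₂ hj
        by_contra hne
        exact hall u v j₂ _ (hadjclique j₂ j₁ (Ne.symm hne)) hj
      have hsurj : Function.Surjective (fun j : Fin k => γ' (Sum.inr (u, v, j))) :=
        Finite.surjective_of_injective hinj
      obtain ⟨j, hj⟩ := hsurj (γ' (Sum.inl u))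
      have hj' : γ' (Sum.inr (u, v, j)) = γ' (Sum.inl u) := hj
      have hjlast : j = last := by
        by_contra hne
        have hjlt : (j : ℕ) < k - 1 := by
          have h1 := j.isLt
          have h3 : (j : ℕ) ≠ k - 1 := fun hc => hne (Fin.ext (by simpa [hlast] using hc))
          omega
        have hadj : (gadgetGraph R k).Adj (Sum.inr (u, v, j)) (Sum.inl u) := by
          rw [gadgetGraph, SimpleGraph.fromRel_adj]
          exact ⟨by simp, Or.inr ⟨hr, Or.inl ⟨rfl, hjlt⟩⟩⟩
        exact hall u v j _ hadj hj'.symm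
      have hadjv : (gadgetGraph R k).Adj (Sum.inr (u, v, last)) (Sum.inl v) := by
        rw [gadgetGraph, SimpleGraph.fromRel_adj]
        exact ⟨by simp, Or.inr ⟨hr, Or.inr ⟨rfl, rfl⟩⟩⟩
      have hfin := hall u v last _ hadjv
      rw [← hjlast, hj'] at hfin
      exact fun hc => hfin hc.symm
    refine ⟨fun x => γ' (Sum.inl x), ?_⟩
    intro a b hab
    rcases (hR a b).1 hab with h | h
    · exact key a b h
    · exact (key b a h).symm
end

section
/- Let k ≥ 3 and let G' be obtained from a graph G by replacing every edge with the k-edge gadget. Then Δ_{E(G')} = k, and consequently every k-partial k-coloring of G' is a proper k-coloring of G'. -/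
section Aux
variable {V : Type*} [Fintype V] [DecidableEq V]


lemma gadget_nbhd (R : V → V → Prop) (k : ℕ)
    [DecidableRel (gadgetGraph R k).Adj]
    (u v : V) (i : Fin k) (h : R u v) :
    (gadgetGraph R k).neighborFinset (Sum.inr (u,v,i)) =
      insert (Sum.inl (if (i:ℕ) < k - 1 then u else v))
        ((Finset.univ.erase i).image (fun j => (Sum.inr (u,v,j) : V ⊕ (V × V × Fin k)))) := by
  have hik : (i:ℕ) < k := i.isLt
  ext b
  rw [SimpleGraph.mem_neighborFinset]
  simp only [SimpleGraph.mem_neighborFinset, gadgetGraph, SimpleGraph.fromRel_adj,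
    Finset.mem_insert, Finset.mem_image, Finset.mem_erase, Finset.mem_univ, true_and,
    and_true]
  cases b with
  | inl x =>
    simp only [gadgetRel, ne_eq, reduceCtorEq, not_false_eq_true, true_and, false_or,
      Sum.inl.injEq]
    constructor
    · rintro ⟨-, (⟨rfl, hc⟩ | ⟨rfl, hc⟩)⟩
      · left; rw [if_pos hc]
      · left; rw [if_neg (by omega)]
    · rintro (rfl | ⟨j, hj, hcon⟩)
      · refine ⟨h, ?_⟩
        by_cases hc : (i:ℕ) < k - 1
        · rw [if_pos hc]; exact Or.inl ⟨rfl, hc⟩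
        · rw [if_neg hc]; exact Or.inr ⟨rfl, by omega⟩
      · exact absurd hcon (by simp)
  | inr p =>
    obtain ⟨u', v', j⟩ := p
    simp only [gadgetRel, ne_eq, Sum.inr.injEq, Prod.mk.injEq]
    constructor
    · rintro ⟨hne, (⟨rfl, rfl, -⟩ | ⟨rfl, rfl, -⟩)⟩ <;>
      · right; exact ⟨j, fun hij => hne ⟨rfl, rfl, hij.symm⟩, rfl, rfl, rfl⟩
    · rintro (hcon | ⟨j', hj', rfl, rfl, rfl⟩)
      · exact absurd hcon (by simp)
      · exact ⟨fun hh => hj' hh.2.2.symm, Or.inl ⟨rfl, rfl, h⟩⟩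

lemma gadget_deg (R : V → V → Prop) (k : ℕ)
    [DecidableRel (gadgetGraph R k).Adj]
    (u v : V) (i : Fin k) (h : R u v) :
    (gadgetGraph R k).degree (Sum.inr (u,v,i)) = k := by
  have hik : (i:ℕ) < k := i.isLt
  rw [SimpleGraph.degree, gadget_nbhd R k u v i h, Finset.card_insert_of_notMem (by simp),
    Finset.card_image_of_injective _ (by intro a b hab; simpa using hab),
    Finset.card_erase_of_mem (Finset.mem_univ i), Finset.card_univ, Fintype.card_fin]
  omega

lemma gadget_adj_endpoint (R : V → V → Prop) (k : ℕ)
    {a b : V ⊕ (V × V × Fin k)} (hab : (gadgetGraph R k).Adj a b) :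
    ∃ u v i, (a = Sum.inr (u,v,i) ∨ b = Sum.inr (u,v,i)) ∧ R u v := by
  rw [gadgetGraph, SimpleGraph.fromRel_adj] at hab
  obtain ⟨-, hrel | hrel⟩ := hab <;>
  · cases a with
    | inl x =>
      cases b with
      | inl y => exact absurd hrel (by simp [gadgetRel])
      | inr p =>
        obtain ⟨u, v, i⟩ := p
        first
        | exact ⟨u, v, i, Or.inr rfl, hrel.1⟩
        | exact absurd hrel (by simp [gadgetRel])
    | inr p =>
      obtain ⟨u, v, i⟩ := p
      cases b with
      | inl y =>
        first
        | exact ⟨u, v, i, Or.inl rfl, hrel.1⟩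
        | exact absurd hrel (by simp [gadgetRel])
      | inr q =>
        obtain ⟨u', v', j⟩ := q
        first
        | exact ⟨u, v, i, Or.inl rfl, hrel.2.2⟩
        | exact ⟨u, v, i, Or.inl rfl, by obtain ⟨rfl, rfl, hr⟩ := hrel; exact hr⟩


end Aux

theorem gadget_deltaE_eq_and_partial_is_proper {V : Type*} [Fintype V] [DecidableEq V]
    (G : SimpleGraph V) (R : V → V → Prop)
    (hR : ∀ u v, G.Adj u v ↔ (R u v ∨ R v u))
    (hRasym : ∀ u v, R u v → ¬ R v u)
    (hE : ∃ u v, G.Adj u v)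
    (k : ℕ) (hk : 3 ≤ k)
    [DecidableRel (gadgetGraph R k).Adj] :
    deltaE (gadgetGraph R k) = k ∧
      ∀ γ : (V ⊕ (V × V × Fin k)) → Fin k,
        IsPartialColoring (gadgetGraph R k) k γ →
          IsProperColoring (gadgetGraph R k) γ := by

  -- get an R-edge
  obtain ⟨u₀, v₀, huv⟩ := hE
  have hR0 : ∃ u v, R u v := by
    rcases (hR u₀ v₀).1 huv with h | h
    exacts [⟨u₀, v₀, h⟩, ⟨v₀, u₀, h⟩]
  obtain ⟨u, v, hruv⟩ := hR0
  constructor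
  · apply le_antisymm
    · apply Finset.sup_le
      rintro ⟨a, b⟩ -
      dsimp only
      split_ifs with hab
      · obtain ⟨u', v', i, hend, hr⟩ := gadget_adj_endpoint R k hab
        rcases hend with rfl | rfl
        · exact le_trans (min_le_left _ _) (le_of_eq (gadget_deg R k u' v' i hr))
        · exact le_trans (min_le_right _ _) (le_of_eq (gadget_deg R k u' v' i hr))
      · exact Nat.zero_le k
    · have h01 : (⟨0, by omega⟩ : Fin k) ≠ ⟨1, by omega⟩ := by
        intro hh; simpa using congrArg Fin.val hh
      have hadj : (gadgetGraph R k).Adj (Sum.inr (u, v, ⟨0, by omega⟩))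
          (Sum.inr (u, v, ⟨1, by omega⟩)) := by
        rw [gadgetGraph, SimpleGraph.fromRel_adj]
        exact ⟨by simp [h01], Or.inl ⟨rfl, rfl, hruv⟩⟩
      calc k = (fun p : (V ⊕ (V × V × Fin k)) × (V ⊕ (V × V × Fin k)) =>
            if (gadgetGraph R k).Adj p.1 p.2 then
              min ((gadgetGraph R k).degree p.1) ((gadgetGraph R k).degree p.2) else 0)
            (Sum.inr (u, v, ⟨0, by omega⟩), Sum.inr (u, v, ⟨1, by omega⟩)) := by
              simp [hadj, gadget_deg R k u v _ hruv]
        _ ≤ deltaE (gadgetGraph R k) := by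
              rw [deltaE]
              exact Finset.le_sup
                (f := fun p : (V ⊕ (V × V × Fin k)) × (V ⊕ (V × V × Fin k)) =>
                  if (gadgetGraph R k).Adj p.1 p.2 then
                    min ((gadgetGraph R k).degree p.1) ((gadgetGraph R k).degree p.2) else 0)
                (Finset.mem_univ
                ((Sum.inr (u, v, ⟨0, by omega⟩), Sum.inr (u, v, ⟨1, by omega⟩)) :
                  (V ⊕ (V × V × Fin k)) × (V ⊕ (V × V × Fin k))))
  · intro γ hγ a b hab
    obtain ⟨u', v', i, hend, hr⟩ := gadget_adj_endpoint R k hab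
    have key : ∀ c : V ⊕ (V × V × Fin k), ∀ x,
        (gadgetGraph R k).degree c = k → (gadgetGraph R k).Adj c x → γ x ≠ γ c := by
      intro c x hdeg hcx
      have hmin : k ≤ (((gadgetGraph R k).neighborFinset c).filter (fun w => γ w ≠ γ c)).card := by
        have := hγ c
        rwa [hdeg, min_self] at this
      have hsub := Finset.filter_subset (fun w => γ w ≠ γ c) ((gadgetGraph R k).neighborFinset c)
      have hcard : ((gadgetGraph R k).neighborFinset c).card ≤
          (((gadgetGraph R k).neighborFinset c).filter (fun w => γ w ≠ γ c)).card := by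
        rw [← SimpleGraph.degree, hdeg]; exact hmin
      have heq := Finset.eq_of_subset_of_card_le hsub hcard
      have hx : x ∈ ((gadgetGraph R k).neighborFinset c).filter (fun w => γ w ≠ γ c) := by
        rw [heq]; exact (SimpleGraph.mem_neighborFinset _ _ _).2 hcx
      exact (Finset.mem_filter.1 hx).2
    rcases hend with rfl | rfl
    · exact fun hgab => key _ b (gadget_deg R k u' v' i hr) hab hgab.symm
    · exact fun hgab => (key _ a (gadget_deg R k u' v' i hr) hab.symm) hgab
end
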